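/- Take the square loss derivative ℓ'(y, s) = 2(s − y) (Laplacian regularized least squares). Assume f : ℝ → ℝ^N is differentiable at ε = 0 and satisfies the perturbed stationarity equation on a neighborhood of 0. Let J ∈ ℝ^{N×N} be the diagonal matrix with first l diagonal entries 1 and the rest 0, and set H = (2/l)·K·J + 2γ_A·I + (2γ_I/N²)·K·L. If H is invertible, then f'(0) = H^{-1} · [ −(1/m)·K_i·μ_i(0) − 2γ_A·f(0) − (2γ_I/(m+n)²)·K_i·L_i·f_i(0) ], where μ_i(0) ∈ ℝ^{m+n} has entries μ_i(0)_j = 2(f(0)_{σ(j)} − y_{σ(j)}) for j ≤ m and 0 otherwise. -/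

import Mathlib

open Matrix

lemma hasDerivAt_mulVec {p q : ℕ} (A : Matrix (Fin p) (Fin q) ℝ)
    {g : ℝ → Fin q → ℝ} {g' : Fin q → ℝ} (hg : HasDerivAt g g' 0) :
    HasDerivAt (fun ε => A.mulVec (g ε)) (A.mulVec g') 0 := by
  rw [hasDerivAt_pi] at hg ⊢
  intro k
  simpa [Matrix.mulVec, dotProduct] using
    HasDerivAt.fun_sum (u := Finset.univ) fun j _ => (hg j).const_mul (A k j)

/-- For the square loss (LapRLS), if the perturbed solution curve `f` is
differentiable at `ε = 0`, satisfies the perturbed stationarity equation near `0`, and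
`H = (2/l)·K·J + 2γ_A·I + (2γ_I/N²)·K·L` is invertible, then
`f'(0) = H⁻¹·[−(1/m)·K_i·μ_i(0) − 2γ_A·f(0) − (2γ_I/(m+n)²)·K_i·L_i·f_i(0)]`. -/
theorem bif_column_formula_laprls
    (l u m n : ℕ) (hl : 1 ≤ l) (hu : 1 ≤ u) (hm : 1 ≤ m) (hn : 1 ≤ n) (hml : m ≤ l)
    (K L : Matrix (Fin (l + u)) (Fin (l + u)) ℝ) (hK : K.IsSymm) (hL : L.IsSymm)
    (y : Fin l → ℝ) (γA γI : ℝ)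
    (σ : Fin (m + n) → Fin (l + u)) (hσ : Function.Injective σ)
    (hσl : ∀ j : Fin (m + n), (j : ℕ) < m → ((σ j : ℕ) < l))
    (Ki : Matrix (Fin (l + u)) (Fin (m + n)) ℝ)
    (hKi : ∀ (k : Fin (l + u)) (j : Fin (m + n)), Ki k j = K k (σ j))
    (Li : Matrix (Fin (m + n)) (Fin (m + n)) ℝ) (hLi : Li.IsSymm)
    (f : ℝ → Fin (l + u) → ℝ) (D : Fin (l + u) → ℝ)
    (hf : HasDerivAt f D 0)
    (μ : ℝ → Fin (l + u) → ℝ)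
    (hμ : ∀ (ε : ℝ) (j : Fin (l + u)),
      μ ε j = if h : (j : ℕ) < l then 2 * (f ε j - y ⟨j, h⟩) else 0)
    (μi : ℝ → Fin (m + n) → ℝ)
    (hμi : ∀ (ε : ℝ) (j : Fin (m + n)),
      μi ε j = if h : (j : ℕ) < m then 2 * (f ε (σ j) - y ⟨σ j, hσl j h⟩) else 0)
    (fi : ℝ → Fin (m + n) → ℝ)
    (hfi : ∀ (ε : ℝ) (j : Fin (m + n)), fi ε j = f ε (σ j))
    (hstat : ∀ᶠ ε in nhds (0 : ℝ),
      (-(2 * γA)) • f ε =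
        ((1 - ε) / (l : ℝ)) • K.mulVec (μ ε)
        + ((1 - ε) * (2 * γI) / ((l : ℝ) + (u : ℝ)) ^ 2) • K.mulVec (L.mulVec (f ε))
        + (ε / (m : ℝ)) • Ki.mulVec (μi ε)
        + (ε * (2 * γI) / ((m : ℝ) + (n : ℝ)) ^ 2) • Ki.mulVec (Li.mulVec (fi ε)))
    (J : Matrix (Fin (l + u)) (Fin (l + u)) ℝ)
    (hJ : J = Matrix.diagonal (fun j : Fin (l + u) =>
      if (j : ℕ) < l then (1 : ℝ) else 0))
    (H : Matrix (Fin (l + u)) (Fin (l + u)) ℝ)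
    (hH : H = (2 / (l : ℝ)) • (K * J) + (2 * γA) • 1
        + (2 * γI / ((l : ℝ) + (u : ℝ)) ^ 2) • (K * L))
    (hHinv : IsUnit H.det) :
    D = H⁻¹.mulVec (
      (-(1 / (m : ℝ))) • Ki.mulVec (μi 0)
      - (2 * γA) • f 0
      - (2 * γI / ((m : ℝ) + (n : ℝ)) ^ 2) • Ki.mulVec (Li.mulVec (fi 0))) := by
  have hfc : ∀ k, HasDerivAt (fun ε => f ε k) (D k) 0 := hasDerivAt_pi.mp hf
  -- derivative of μ
  have hμd : HasDerivAt μ (fun j => if h : (j : ℕ) < l then 2 * D j else 0) 0 := by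
    rw [hasDerivAt_pi]
    intro j
    by_cases hj : (j : ℕ) < l
    · have hfun : (fun ε => μ ε j) = fun ε => 2 * (f ε j - y ⟨j, hj⟩) := by
        funext ε; rw [hμ, dif_pos hj]
      rw [hfun, dif_pos hj]
      exact ((hfc j).sub_const _).const_mul 2
    · have hfun : (fun ε => μ ε j) = fun _ => (0 : ℝ) := by
        funext ε; rw [hμ, dif_neg hj]
      rw [hfun, dif_neg hj]
      exact hasDerivAt_const 0 0
  -- derivative of μi
  have hμid : HasDerivAt μi (fun j => if h : (j : ℕ) < m then 2 * D (σ j) else 0) 0 := by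
    rw [hasDerivAt_pi]
    intro j
    by_cases hj : (j : ℕ) < m
    · have hfun : (fun ε => μi ε j) = fun ε => 2 * (f ε (σ j) - y ⟨σ j, hσl j hj⟩) := by
        funext ε; rw [hμi, dif_pos hj]
      rw [hfun, dif_pos hj]
      exact ((hfc (σ j)).sub_const _).const_mul 2
    · have hfun : (fun ε => μi ε j) = fun _ => (0 : ℝ) := by
        funext ε; rw [hμi, dif_neg hj]
      rw [hfun, dif_neg hj]
      exact hasDerivAt_const 0 0
  -- derivative of fi
  have hfid : HasDerivAt fi (fun j => D (σ j)) 0 := by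
    rw [hasDerivAt_pi]
    intro j
    have hfun : (fun ε => fi ε j) = fun ε => f ε (σ j) := by funext ε; rw [hfi]
    rw [hfun]
    exact hfc (σ j)
  -- derivatives of the four scalar coefficients
  have hc1 : HasDerivAt (fun ε : ℝ => (1 - ε) / (l : ℝ)) ((0 - 1) / (l : ℝ)) 0 :=
    ((hasDerivAt_const 0 (1 : ℝ)).sub (hasDerivAt_id 0)).div_const _
  have hc2 : HasDerivAt (fun ε : ℝ => (1 - ε) * (2 * γI) / ((l : ℝ) + (u : ℝ)) ^ 2)
      ((0 - 1) * (2 * γI) / ((l : ℝ) + (u : ℝ)) ^ 2) 0 :=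
    (((hasDerivAt_const 0 (1 : ℝ)).sub (hasDerivAt_id 0)).mul_const _).div_const _
  have hc3 : HasDerivAt (fun ε : ℝ => ε / (m : ℝ)) (1 / (m : ℝ)) 0 :=
    (hasDerivAt_id 0).div_const _
  have hc4 : HasDerivAt (fun ε : ℝ => ε * (2 * γI) / ((m : ℝ) + (n : ℝ)) ^ 2)
      (1 * (2 * γI) / ((m : ℝ) + (n : ℝ)) ^ 2) 0 :=
    ((hasDerivAt_id 0).mul_const _).div_const _
  -- derivative of the right-hand side
  have h1 := hc1.smul (hasDerivAt_mulVec K hμd)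
  have h2 := hc2.smul (hasDerivAt_mulVec K (hasDerivAt_mulVec L hf))
  have h3 := hc3.smul (hasDerivAt_mulVec Ki hμid)
  have h4 := hc4.smul (hasDerivAt_mulVec Ki (hasDerivAt_mulVec Li hfid))
  have hR := ((h1.add h2).add h3).add h4
  have hLHS : HasDerivAt (fun ε => (-(2 * γA)) • f ε) ((-(2 * γA)) • D) 0 :=
    hf.fun_const_smul _
  have hE0 := hstat.self_of_nhds
  have hR' := hR.congr_of_eventuallyEq hstat
  have hEq := hLHS.unique hR'
  -- the key relation K • Dμ = 2 • K (J D)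
  have hvec : (fun j : Fin (l + u) => if h : (j : ℕ) < l then 2 * D j else 0)
      = (2 : ℝ) • J.mulVec D := by
    funext j
    rw [hJ, Pi.smul_apply, Matrix.mulVec_diagonal]
    by_cases hj : (j : ℕ) < l <;> simp [hj]
  have hDμ : K.mulVec (fun j => if h : (j : ℕ) < l then 2 * D j else 0)
      = (2 : ℝ) • K.mulVec (J.mulVec D) := by
    rw [hvec, Matrix.mulVec_smul]
  -- the key algebraic identity
  have Hb : H.mulVec D =
      (-(1 / (m : ℝ))) • Ki.mulVec (μi 0)
      - (2 * γA) • f 0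
      - (2 * γI / ((m : ℝ) + (n : ℝ)) ^ 2) • Ki.mulVec (Li.mulVec (fi 0)) := by
    rw [hH, Matrix.add_mulVec, Matrix.add_mulVec, Matrix.smul_mulVec,
      Matrix.smul_mulVec, Matrix.smul_mulVec, Matrix.one_mulVec,
      ← Matrix.mulVec_mulVec, ← Matrix.mulVec_mulVec]
    linear_combination (norm := module) (-1 : ℝ) • hEq - hE0 - ((l : ℝ))⁻¹ • hDμ
  rw [← Hb, Matrix.mulVec_mulVec, Matrix.nonsing_inv_mul H hHinv, Matrix.one_mulVec]
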